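/- arXiv:2001.06221 — 5 statements merged into one kernel-verified Lean document; each statement's English description precedes it below -/
import Mathlib

section
/- Let p be a prime and n a positive integer. Let G be a group such that for every left 3-Engel element x ∈ G of order p, the normal closure ⟨x⟩^G has no element of order p^{n+1}. Suppose furthermore that for every left 3-Engel element x ∈ G of order p and every g ∈ ⟨x⟩^G of order dividing p^n, the subgroup ⟨x, x^g, x^{g²}, …, x^{g^{p^n − 1}}⟩ is nilpotent. Then for every left 3-Engel element x ∈ G of order p, every element of the normal closure ⟨x⟩^G has order a power of p (indeed order dividing p^n). -/
/-!
Write `y ∈ ⟨x⟩^G` as a word in conjugates `c` of `x` and their inverses, and induct on its length.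
If `y` has order dividing `p^n`, the subgroup `N = ⟨c, c^y, …, c^{y^{p^n-1}}⟩` is normalised by `y`
and nilpotent by hypothesis; a nilpotent group generated by elements of order `p` is a `p`-group,
so `(c^{±1} y)^{p^n} ∈ y^{p^n} N = N` shows that `c^{±1} y` has `p`-power order. As `⟨x⟩^G`
contains no element of order `p^{n+1}`, that order divides `p^n`.
-/

/-- The paper's commutator `[g,h] = g⁻¹h⁻¹gh`. -/
def paperComm {G : Type*} [Group G] (g h : G) : G := g⁻¹ * h⁻¹ * g * h

/-- `x` is a left 3-Engel element of `G`. -/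
def IsLeftThreeEngel {G : Type*} [Group G] (x : G) : Prop :=
  ∀ g : G, paperComm (paperComm (paperComm g x) x) x = 1

open Subgroup Group
open scoped commutatorElement

theorem Commute.mul_pow_prime_pow_add_eq_one {M : Type*} [Monoid M] {p k l : ℕ} {a b : M}
    (h : Commute a b) (ha : a ^ p ^ k = 1) (hb : b ^ p ^ l = 1) : (a * b) ^ p ^ (k + l) = 1 := by
  rw [h.mul_pow, pow_add, pow_mul, ha, one_pow, one_mul, mul_comm, pow_mul, hb, one_pow]

theorem orderOf_dvd_prime_pow_of_forall_orderOf_pow_ne {M : Type*} [Monoid M] {p m n : ℕ}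
    (hp : p.Prime) {g : M} (hg : g ^ p ^ m = 1) (hne : ∀ k, orderOf (g ^ k) ≠ p ^ (n + 1)) :
    orderOf g ∣ p ^ n := by
  obtain ⟨j, -, hj⟩ := (Nat.dvd_prime_pow hp).mp (orderOf_dvd_of_pow_eq_one hg)
  rw [hj]
  refine pow_dvd_pow p (not_lt.mp fun hnj => hne (p ^ (j - (n + 1))) ?_)
  rw [orderOf_pow_of_dvd (pow_ne_zero _ hp.ne_zero) (hj ▸ pow_dvd_pow p (Nat.sub_le _ _)), hj,
    Nat.pow_div (Nat.sub_le _ _) hp.pos, Nat.sub_sub_self hnj]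

section

variable {G : Type*} [Group G]

theorem isPGroup_closure_of_subset_center {p : ℕ} {S : Set G}
    (hS : S ⊆ center G) (hSp : ∀ s ∈ S, ∃ k, s ^ p ^ k = 1) : IsPGroup p (closure S) := by
  have hcentral : closure S ≤ center G := closure_le _ |>.mpr hS
  rintro ⟨g, hg⟩
  suffices ∃ k, g ^ p ^ k = 1 by simpa [Subtype.ext_iff] using this
  induction hg using closure_induction with
  | mem s hs => exact hSp s hs
  | one => exact ⟨0, one_pow _⟩
  | mul a b ha _ iha ihb =>
    obtain ⟨k, hk⟩ := iha
    obtain ⟨l, hl⟩ := ihb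
    have hab : Commute a b := (mem_center_iff.mp (hcentral ha) b).symm
    exact ⟨k + l, hab.mul_pow_prime_pow_add_eq_one hk hl⟩
  | inv a _ iha =>
    obtain ⟨k, hk⟩ := iha
    exact ⟨k, by rw [inv_pow, hk, inv_one]⟩

theorem IsPGroup.of_normal_of_quotient {p : ℕ} {N : Subgroup G} [N.Normal]
    (hN : IsPGroup p N) (hQ : IsPGroup p (G ⧸ N)) : IsPGroup p G := by
  intro g
  obtain ⟨k, hk⟩ := hQ g
  obtain ⟨l, hl⟩ := hN ⟨g ^ p ^ k, (QuotientGroup.eq_one_iff _).mp (by simpa using hk)⟩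
  exact ⟨k + l, by simpa [Subtype.ext_iff, pow_add, pow_mul] using hl⟩

theorem commutatorElement_pow_right_of_mem_center {u : G}
    (hu : ∀ w, ⁅u, w⁆ ∈ center G) (v : G) (m : ℕ) : ⁅u, v ^ m⁆ = ⁅u, v⁆ ^ m := by
  induction m with
  | zero => simp
  | succ m ih =>
    rw [pow_succ', commutatorElement_mul_right_eq_mul_conj, mul_assoc _ v,
      mem_center_iff.mp (hu _) v, ← mul_assoc, mul_inv_cancel_right, ih, pow_succ']

theorem IsPGroup.of_lowerCentralSeries_eq_bot {p c : ℕ} {K : Type*} [Group K] {S : Set K}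
    (hc : (⊤ : Subgroup K).lowerCentralSeries c = ⊥) (hS : closure S = ⊤)
    (hSp : ∀ s ∈ S, ∃ k, s ^ p ^ k = 1) : IsPGroup p K := by
  induction c generalizing K with
  | zero =>
    intro g
    have hg : g ∈ (⊤ : Subgroup K).lowerCentralSeries 0 := mem_top g
    rw [hc, mem_bot] at hg
    exact ⟨0, by simp [hg]⟩
  | succ c ih =>
    set A := (⊤ : Subgroup K).lowerCentralSeries c
    have hA : A ≤ center K := commutator_top_right_eq_bot_iff_le_center.mp hc
    set f := QuotientGroup.mk' A
    have hf : Function.Surjective f := QuotientGroup.mk'_surjective A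
    have hQ : IsPGroup p (K ⧸ A) := by
      refine ih (S := f '' S) ?_ ?_ ?_
      · rw [← map_top_of_surjective f hf, ← map_lowerCentralSeries, QuotientGroup.map_mk'_self]
      · rw [← MonoidHom.map_closure, hS, map_top_of_surjective f hf]
      · rintro _ ⟨s, hs, rfl⟩
        obtain ⟨k, hk⟩ := hSp s hs
        exact ⟨k, by rw [← map_pow, hk, map_one]⟩
    refine IsPGroup.of_normal_of_quotient ?_ hQ
    cases c with
    | zero =>
      rw [show A = closure S from hS.symm]
      exact isPGroup_closure_of_subset_center (Subgroup.subset_closure.trans (hS ▸ hA)) hSp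
    | succ c =>
      rw [show A = _ from Subgroup.lowerCentralSeries_succ _ c, Subgroup.commutator_def]
      refine isPGroup_closure_of_subset_center ?_ ?_
      · rintro _ ⟨u, hu, v, -, rfl⟩
        exact hA (commutator_mem_commutator hu (mem_top v))
      · rintro _ ⟨u, hu, v, -, rfl⟩
        -- `v ^ p ^ k` lies in the central subgroup `A`, and `⁅u, ·⁆` is a homomorphism into it.
        obtain ⟨k, hk⟩ := hQ v
        have hvk : v ^ p ^ k ∈ A := (QuotientGroup.eq_one_iff _).mp (by simpa using hk)
        refine ⟨k, ?_⟩
        rw [← commutatorElement_pow_right_of_mem_center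
          (fun w => hA (commutator_mem_commutator hu (mem_top w))),
          commutatorElement_eq_one_iff_commute]
        exact mem_center_iff.mp (hA hvk) u

theorem isPGroup_closure_of_isNilpotent {p : ℕ} {S : Set G}
    (hnil : Group.IsNilpotent (closure S)) (hSp : ∀ s ∈ S, ∃ k, s ^ p ^ k = 1) :
    IsPGroup p (closure S) := by
  obtain ⟨c, hc⟩ := Subgroup.nilpotent_iff_lowerCentralSeries.mp hnil
  refine IsPGroup.of_lowerCentralSeries_eq_bot hc closure_closure_coe_preimage ?_
  rintro ⟨s, _⟩ hs
  obtain ⟨k, hk⟩ := hSp s hs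
  exact ⟨k, Subtype.ext (by simpa using hk)⟩

theorem inv_pow_mul_mul_pow_mem {M : Subgroup G} {e y : G} (he : e ∈ M)
    (hM : ∀ m ∈ M, y⁻¹ * m * y ∈ M) (k : ℕ) : (y ^ k)⁻¹ * (e * y) ^ k ∈ M := by
  induction k with
  | zero => simp
  | succ k ih =>
    convert hM _ (M.mul_mem ih he) using 1
    rw [pow_succ', pow_succ]
    group

theorem setOf_conj_pow_lt_eq {c y : G} {m : ℕ} (hm : 0 < m)
    (hy : y ^ m = 1) :
    {z | ∃ i < m, z = (y ^ i)⁻¹ * c * y ^ i} = {z | ∃ i : ℕ, z = (y ^ i)⁻¹ * c * y ^ i} := by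
  ext z
  constructor
  · rintro ⟨i, -, rfl⟩
    exact ⟨i, rfl⟩
  · rintro ⟨i, rfl⟩
    exact ⟨i % m, Nat.mod_lt i hm, by rw [← pow_eq_pow_mod i hy]⟩

theorem conj_mem_closure_setOf_conj_pow {c y m : G}
    (hm : m ∈ closure {z | ∃ i : ℕ, z = (y ^ i)⁻¹ * c * y ^ i}) :
    y⁻¹ * m * y ∈ closure {z | ∃ i : ℕ, z = (y ^ i)⁻¹ * c * y ^ i} := by
  have hle : closure {z | ∃ i : ℕ, z = (y ^ i)⁻¹ * c * y ^ i} ≤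
      (closure {z | ∃ i : ℕ, z = (y ^ i)⁻¹ * c * y ^ i}).comap (MulAut.conj y⁻¹).toMonoidHom := by
    rw [closure_le]
    rintro _ ⟨i, rfl⟩
    exact subset_closure ⟨i + 1, by simp [pow_succ, mul_assoc]⟩
  simpa using hle hm

theorem orderOf_mul_dvd_prime_pow_of_isNilpotent {p n : ℕ} (hp : p.Prime)
    {c e y : G} (hc : c ^ p = 1) (hy : y ^ p ^ n = 1)
    (hnil : Group.IsNilpotent (closure {z | ∃ i < p ^ n, z = (y ^ i)⁻¹ * c * y ^ i}))
    (he : e ∈ closure {z | ∃ i < p ^ n, z = (y ^ i)⁻¹ * c * y ^ i})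
    (hne : ∀ k, orderOf ((e * y) ^ k) ≠ p ^ (n + 1)) : orderOf (e * y) ∣ p ^ n := by
  rw [setOf_conj_pow_lt_eq (pow_pos hp.pos n) hy] at hnil he
  have hP : IsPGroup p (closure {z | ∃ i : ℕ, z = (y ^ i)⁻¹ * c * y ^ i}) := by
    refine isPGroup_closure_of_isNilpotent hnil ?_
    rintro _ ⟨i, rfl⟩
    have hconj := conj_pow (a := (y ^ i)⁻¹) (b := c) (i := p)
    rw [inv_inv] at hconj
    exact ⟨1, by rw [pow_one, hconj, hc, mul_one, inv_mul_cancel]⟩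
  have hmem := inv_pow_mul_mul_pow_mem he (fun _ => conj_mem_closure_setOf_conj_pow) (p ^ n)
  rw [hy, inv_one, one_mul] at hmem
  obtain ⟨k, hk⟩ := hP ⟨_, hmem⟩
  refine orderOf_dvd_prime_pow_of_forall_orderOf_pow_ne hp (m := n + k) ?_ hne
  rw [pow_add, pow_mul]
  simpa [Subtype.ext_iff] using hk

theorem map_paperComm {H : Type*} [Group H] (f : G →* H) (a b : G) :
    f (paperComm a b) = paperComm (f a) (f b) := by
  simp [paperComm]

theorem IsLeftThreeEngel.map_of_surjective {H : Type*} [Group H] {f : G →* H}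
    (hf : Function.Surjective f) {x : G} (hx : IsLeftThreeEngel x) : IsLeftThreeEngel (f x) := by
  intro h
  obtain ⟨g, rfl⟩ := hf h
  rw [← map_paperComm, ← map_paperComm, ← map_paperComm, hx g, map_one]

theorem IsLeftThreeEngel.of_isConj {x c : G} (hx : IsLeftThreeEngel x)
    (h : IsConj x c) : IsLeftThreeEngel c := by
  obtain ⟨d, rfl⟩ := isConj_iff.mp h
  simpa using hx.map_of_surjective (f := (MulAut.conj d).toMonoidHom) (MulAut.conj d).surjective

theorem IsConj.orderOf_eq {x c : G} (h : IsConj x c) :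
    orderOf x = orderOf c := by
  obtain ⟨d, rfl⟩ := isConj_iff.mp h
  simpa using ((MulAut.conj d).orderOf_eq x).symm

theorem normalClosure_singleton_eq_of_isConj {x c : G} (h : IsConj x c) :
    normalClosure {x} = normalClosure {c} := by
  simp only [normalClosure, conjugatesOfSet, Set.mem_singleton_iff, Set.iUnion_iUnion_eq_left,
    isConj_iff_conjugatesOf_eq.mp h]

end

theorem stmt3_general {G : Type*} [Group G] (p n : ℕ) (hp : p.Prime)
    (hno : ∀ x : G, IsLeftThreeEngel x → orderOf x = p →
      ∀ y ∈ Subgroup.normalClosure ({x} : Set G), orderOf y ≠ p ^ (n + 1))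
    (hnilp : ∀ x : G, IsLeftThreeEngel x → orderOf x = p →
      ∀ g ∈ Subgroup.normalClosure ({x} : Set G), orderOf g ∣ p ^ n →
        Group.IsNilpotent
          ↥(Subgroup.closure {y : G | ∃ i < p ^ n, y = (g ^ i)⁻¹ * x * g ^ i})) :
    ∀ x : G, IsLeftThreeEngel x → orderOf x = p →
      ∀ y ∈ Subgroup.normalClosure ({x} : Set G), orderOf y ∣ p ^ n := by
  intro x hx hxo y hy
  have step : ∀ c ∈ conjugatesOfSet {x}, ∀ e ∈ zpowers c, ∀ y ∈ normalClosure {x},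
      orderOf y ∣ p ^ n → orderOf (e * y) ∣ p ^ n := by
    intro c hc e he y hy hyn
    have hxc : IsConj x c := by simpa using mem_conjugatesOfSet_iff.mp hc
    have hco : orderOf c = p := hxc.orderOf_eq ▸ hxo
    have hey : e * y ∈ normalClosure {x} :=
      mul_mem (Subgroup.zpowers_le.mpr (conjugatesOfSet_subset_normalClosure hc) he) hy
    have hcT : c ∈ closure {z | ∃ i < p ^ n, z = (y ^ i)⁻¹ * c * y ^ i} :=
      Subgroup.subset_closure ⟨0, pow_pos hp.pos n, by simp⟩
    exact orderOf_mul_dvd_prime_pow_of_isNilpotent hp (hco ▸ pow_orderOf_eq_one c)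
      (orderOf_dvd_iff_pow_eq_one.mp hyn)
      (hnilp c (hx.of_isConj hxc) hco y (normalClosure_singleton_eq_of_isConj hxc ▸ hy) hyn)
      (Subgroup.zpowers_le.mpr hcT he)
      fun k => hno x hx hxo _ (pow_mem hey k)
  induction hy using Subgroup.closure_induction_left with
  | one => simp
  | mul_left c hc y hy ih => exact step c hc c (mem_zpowers c) y hy ih
  | inv_mul_cancel c hc y hy ih => exact step c hc c⁻¹ (inv_mem (mem_zpowers c)) y hy ih

theorem stmt3 {G : Type*} [Group G] (p n : ℕ) (hp : p.Prime) (hn : 0 < n)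
    (hno : ∀ x : G, IsLeftThreeEngel x → orderOf x = p →
      ∀ y ∈ Subgroup.normalClosure ({x} : Set G), orderOf y ≠ p ^ (n + 1))
    (hnilp : ∀ x : G, IsLeftThreeEngel x → orderOf x = p →
      ∀ g ∈ Subgroup.normalClosure ({x} : Set G), orderOf g ∣ p ^ n →
        Group.IsNilpotent
          ↥(Subgroup.closure {y : G | ∃ i < p ^ n, y = (g ^ i)⁻¹ * x * g ^ i})) :
    ∀ x : G, IsLeftThreeEngel x → orderOf x = p →
      ∀ y ∈ Subgroup.normalClosure ({x} : Set G), orderOf y ∣ p ^ n :=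
  stmt3_general p n hp hno hnilp
end

section
/- Let G_β = ⟨x, a, b, c⟩ be a group generated by involutions x, a, b, c such that a, b, c pairwise commute and ⟨u, v^g⟩ is nilpotent of class at most 2 for all u, v ∈ {x, a, b, c} and all g ∈ G_β. Then: (1) [x, x^{ab}] = [x^a, x^b] and this element commutes with x, a and b; (2) [x, x^{bc}] = [x^b, x^c] and this element commutes with x, b and c; (3) [x, x^{ca}] = [x^c, x^a] and this element commutes with x, c and a. -/
open scoped commutatorElement

section

variable {G : Type*} [Group G]

theorem commutatorElement_commutatorElement_eq_one {S : Subgroup G}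
    (hS : S.lowerCentralSeries 2 = ⊥) {g h k : G} (hg : g ∈ S) (hh : h ∈ S) (hk : k ∈ S) :
    ⁅⁅g, h⁆, k⁆ = 1 := by
  rw [← Subgroup.mem_bot, ← hS]
  exact Subgroup.commutator_mem_commutator (Subgroup.commutator_mem_commutator hg hh) hk

theorem commute_commutatorElement_of_closure_pair {u v : G}
    (h : (⊤ : Subgroup (Subgroup.closure {u, v})).lowerCentralSeries 2 = ⊥) :
    Commute ⁅u, v⁆ u := by
  have hS : (Subgroup.closure {u, v}).lowerCentralSeries 2 = ⊥ := by
    rw [← Subgroup.top_subtype_lowerCentralSeries, h, Subgroup.map_bot]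
  have mem {g : G} (hg : g ∈ ({u, v} : Set G)) : g ∈ Subgroup.closure {u, v} :=
    Subgroup.subset_closure hg
  exact commutatorElement_eq_one_iff_commute.mp <|
    commutatorElement_commutatorElement_eq_one hS (mem (by simp)) (mem (by simp)) (mem (by simp))

theorem paperComm_eq_commutatorElement {u v : G} (hu : u⁻¹ = u) (hv : v⁻¹ = v) :
    paperComm u v = ⁅u, v⁆ := by
  rw [paperComm, commutatorElement_def, hu, hv]

theorem conj_inv_eq_self {x : G} (hx : x⁻¹ = x) (g : G) :
    (g⁻¹ * x * g)⁻¹ = g⁻¹ * x * g := by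
  rw [mul_inv_rev, mul_inv_rev, inv_inv, hx, mul_assoc]

theorem conj_conj_eq_self {g : G} (hg : g⁻¹ = g) (v : G) : g⁻¹ * (g⁻¹ * v * g) * g = v :=
  calc g⁻¹ * (g⁻¹ * v * g) * g = g⁻¹ * (g * v * g⁻¹) * g := by rw [hg]
    _ = v := by group

theorem commute_commutatorElement_of_conj_eq {g u v : G}
    (h : ⁅g⁻¹ * u * g, g⁻¹ * v * g⁆ = ⁅u, v⁆) : Commute ⁅u, v⁆ g := by
  have hconj : g⁻¹ * ⁅u, v⁆ * g = ⁅g⁻¹ * u * g, g⁻¹ * v * g⁆ := by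
    simpa only [inv_inv] using conjugate_commutatorElement u v g⁻¹
  rw [h] at hconj
  calc ⁅u, v⁆ * g = g * (g⁻¹ * ⁅u, v⁆ * g) := by group
    _ = g * ⁅u, v⁆ := by rw [hconj]

theorem commute_conj_of_commute_commutatorElement {u v : G} (hu : u⁻¹ = u) (hv : v⁻¹ = v)
    (h : Commute ⁅u, v⁆ u) : Commute v (u⁻¹ * v * u) := by
  have h' := h.eq
  rw [commutatorElement_def, hu, hv] at h'
  rw [hu]
  apply mul_left_cancel (a := u)
  simpa only [mul_assoc] using h'

theorem commutatorElement_inv_eq_self_of_commute {u v : G} (hu : u⁻¹ = u)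
    (h : Commute ⁅u, v⁆ u) : ⁅u, v⁆⁻¹ = ⁅u, v⁆ :=
  calc ⁅u, v⁆⁻¹ = ⁅v, u⁻¹⁆ := by rw [commutatorElement_inv, hu]
    _ = u⁻¹ * ⁅u, v⁆ * u := commutatorElement_inv_right v u
    _ = ⁅u, v⁆ := by rw [mul_assoc, h.eq, inv_mul_cancel_left]

theorem commute_mul_conj_of_commute {a b c : G} (hc : Commute c (b⁻¹ * c * b))
    (hca : Commute c a) (hab : Commute a b) : Commute (c * a) (b⁻¹ * (c * a) * b) := by
  have hba : b⁻¹ * a * b = a := by rw [mul_assoc, hab.eq, inv_mul_cancel_left]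
  have hda : Commute (b⁻¹ * c * b) a := by
    simpa only [inv_inv, hba] using hca.conj b⁻¹
  have e : b⁻¹ * (c * a) * b = b⁻¹ * c * b * (b⁻¹ * a * b) := by group
  rw [e, hba]
  exact (hc.mul_right hca).mul_left (hda.symm.mul_right (Commute.refl a))

theorem commute_mul_conj_conj_of_commute {x a b : G} (hx : x⁻¹ = x) (ha : a⁻¹ = a)
    (hab : Commute a b) (hxy : Commute x (a⁻¹ * x * a))
    (hc : Commute (x⁻¹ * a * x) (b⁻¹ * (x⁻¹ * a * x) * b)) :
    Commute (x * (a⁻¹ * x * a)) (b⁻¹ * (x * (a⁻¹ * x * a)) * b) := by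
  have hp : x⁻¹ * a * x * a = x * (a⁻¹ * x * a) := by simp only [hx, ha, mul_assoc]
  have hca : Commute (x⁻¹ * a * x) a := by
    change x⁻¹ * a * x * a = a * (x⁻¹ * a * x)
    rw [hp, hxy.eq]
    simp only [hx, ha, mul_assoc]
  rw [← hp]
  exact commute_mul_conj_of_commute hc hca hab

theorem commutatorElement_eq_of_commute_square {x y z w : G}
    (hx : x⁻¹ = x) (hy : y⁻¹ = y) (hz : z⁻¹ = z) (hw : w⁻¹ = w)
    (hxy : Commute x y) (hxz : Commute x z) (hyw : Commute y w) (hzw : Commute z w)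
    (hpq : Commute (x * y) (z * w)) : ⁅y, z⁆ = ⁅x, w⁆ := by
  obtain ⟨p, rfl⟩ : ∃ p, y = x * p := ⟨x⁻¹ * y, (mul_inv_cancel_left x y).symm⟩
  obtain ⟨q, rfl⟩ : ∃ q, w = z * q := ⟨z⁻¹ * w, (mul_inv_cancel_left z w).symm⟩
  have cancel_x (g : G) : x * (x * g) = g := by nth_rw 1 [← hx]; exact inv_mul_cancel_left x g
  have cancel_z (g : G) : z * (z * g) = g := by nth_rw 1 [← hz]; exact inv_mul_cancel_left z g
  have hxp : Commute x p := by simpa only [cancel_x] using (Commute.refl x).mul_right hxy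
  have hzq : Commute z q := by simpa only [cancel_z] using (Commute.refl z).mul_right hzw
  rw [cancel_x, cancel_z] at hpq
  have hq : q⁻¹ = q := by
    rw [mul_inv_rev, hz, hzq.eq] at hw
    exact mul_right_cancel hw
  have h_left : ⁅x * p, z⁆ = p * z * (p * z) := by
    rw [commutatorElement_def, hy, hz]
    simp only [mul_assoc]
    rw [hxp.left_comm, hxz.left_comm, cancel_x]
  have h_right : ⁅x, z * q⁆ = x * q * (x * q) := by
    rw [commutatorElement_def, hw, hx]
    simp only [mul_assoc]
    rw [hzq.left_comm, hxz.symm.left_comm, cancel_z]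
  -- `(x p) (z q)` is an involution, and reordering its square gives `x q x (p z)² q`.
  have h_rel : x * q * x * (p * z * (p * z)) * q = 1 := by
    have hsq : x * p * (z * q) * (x * p * (z * q)) = 1 :=
      mul_eq_one_iff_eq_inv.mpr (by rw [mul_inv_rev, hy, hw, hyw.eq])
    rw [← hsq]
    simp only [mul_assoc]
    rw [hzq.left_comm, hpq.left_comm, hxz.symm.left_comm, hxp.symm.left_comm]
  rw [h_left, h_right, eq_inv_mul_of_mul_eq (mul_eq_one_iff_eq_inv.mp h_rel)]
  simp only [mul_inv_rev, hx, hq, mul_assoc]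

theorem commutatorElement_conj_eq_of_sandwich {X : Set G} {x a b : G}
    (hX : ∀ u ∈ X, ∀ v ∈ X, ∀ g : G, Commute ⁅u, g⁻¹ * v * g⁆ u)
    (hxX : x ∈ X) (haX : a ∈ X) (hbX : b ∈ X)
    (hx : x⁻¹ = x) (ha : a⁻¹ = a) (hb : b⁻¹ = b) (hab : Commute a b) :
    ⁅a⁻¹ * x * a, b⁻¹ * x * b⁆ = ⁅x, (a * b)⁻¹ * x * (a * b)⁆ := by
  set y := a⁻¹ * x * a with hy_def
  set z := b⁻¹ * x * b with hz_def
  set w := (a * b)⁻¹ * x * (a * b) with hw_def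
  have hy : y⁻¹ = y := conj_inv_eq_self hx a
  have hz : z⁻¹ = z := conj_inv_eq_self hx b
  have hconj (u v : G) (hu : u ∈ X) (hv : v ∈ X) (hu' : u⁻¹ = u) (hv' : v⁻¹ = v) :
      Commute v (u⁻¹ * v * u) := by
    refine commute_conj_of_commute_commutatorElement hu' hv' ?_
    simpa only [inv_one, one_mul, mul_one] using hX u hu v hv 1
  have hxy : Commute x y := hconj a x haX hxX ha hx
  have hxz : Commute x z := hconj b x hbX hxX hb hx
  have hyb : b⁻¹ * y * b = w := by rw [hy_def, hw_def]; group
  have hza : a⁻¹ * z * a = w := by rw [hz_def, hw_def, hab.eq]; group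
  have hyw : Commute y w :=
    hyb ▸ commute_conj_of_commute_commutatorElement (v := y) hb hy (hX b hbX x hxX a)
  have hzw : Commute z w :=
    hza ▸ commute_conj_of_commute_commutatorElement (v := z) ha hz (hX a haX x hxX b)
  have hpq : Commute (x * y) (z * w) := by
    have hq : b⁻¹ * (x * y) * b = z * w :=
      calc b⁻¹ * (x * y) * b = (b⁻¹ * x * b) * (b⁻¹ * y * b) := by group
        _ = z * w := by rw [hyb]
    rw [← hq]
    exact commute_mul_conj_conj_of_commute hx ha hab hxy <|
      commute_conj_of_commute_commutatorElement hb (conj_inv_eq_self ha x) (hX b hbX a haX x)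
  exact commutatorElement_eq_of_commute_square hx hy hz (conj_inv_eq_self hx (a * b))
    hxy hxz hyw hzw hpq

theorem paperComm_conj_mul_eq_and_commute {X : Set G} {x a b : G}
    (hX : ∀ u ∈ X, ∀ v ∈ X, ∀ g : G, Commute ⁅u, g⁻¹ * v * g⁆ u)
    (hxX : x ∈ X) (haX : a ∈ X) (hbX : b ∈ X)
    (hx : x⁻¹ = x) (ha : a⁻¹ = a) (hb : b⁻¹ = b) (hab : Commute a b) :
    paperComm x ((a * b)⁻¹ * x * (a * b)) = paperComm (a⁻¹ * x * a) (b⁻¹ * x * b) ∧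
      Commute (paperComm x ((a * b)⁻¹ * x * (a * b))) x ∧
      Commute (paperComm x ((a * b)⁻¹ * x * (a * b))) a ∧
      Commute (paperComm x ((a * b)⁻¹ * x * (a * b))) b := by
  set w := (a * b)⁻¹ * x * (a * b) with hw_def
  have hwb : b⁻¹ * w * b = a⁻¹ * x * a := by
    rw [show w = b⁻¹ * (a⁻¹ * x * a) * b by rw [hw_def]; group, conj_conj_eq_self hb]
  have hwa : a⁻¹ * w * a = b⁻¹ * x * b := by
    rw [show w = a⁻¹ * (b⁻¹ * x * b) * a by rw [hw_def, hab.eq]; group, conj_conj_eq_self ha]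
  have h_eq := commutatorElement_conj_eq_of_sandwich hX hxX haX hbX hx ha hb hab
  have htx : Commute ⁅x, w⁆ x := hX x hxX x hxX (a * b)
  have hta : Commute ⁅x, w⁆ a :=
    commute_commutatorElement_of_conj_eq (by rw [hwa]; exact h_eq)
  have htb : Commute ⁅x, w⁆ b := by
    refine commute_commutatorElement_of_conj_eq ?_
    rw [hwb, ← commutatorElement_inv, h_eq, commutatorElement_inv_eq_self_of_commute hx htx]
  rw [paperComm_eq_commutatorElement hx (conj_inv_eq_self hx _),
    paperComm_eq_commutatorElement (conj_inv_eq_self hx a) (conj_inv_eq_self hx b)]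
  exact ⟨h_eq.symm, htx, hta, htb⟩

end

theorem stmt5_general {G : Type*} [Group G] (x a b c : G)
    (hx : x ^ 2 = 1) (ha : a ^ 2 = 1) (hb : b ^ 2 = 1) (hc : c ^ 2 = 1)
    (hab : Commute a b) (hbc : Commute b c) (hca : Commute c a)
    (hsand : ∀ u ∈ ({x, a, b, c} : Set G), ∀ v ∈ ({x, a, b, c} : Set G), ∀ g : G,
      (⊤ : Subgroup ↥(Subgroup.closure ({u, g⁻¹ * v * g} : Set G))).lowerCentralSeries 2 = ⊥) :
    (paperComm x ((a * b)⁻¹ * x * (a * b)) = paperComm (a⁻¹ * x * a) (b⁻¹ * x * b) ∧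
      Commute (paperComm x ((a * b)⁻¹ * x * (a * b))) x ∧
      Commute (paperComm x ((a * b)⁻¹ * x * (a * b))) a ∧
      Commute (paperComm x ((a * b)⁻¹ * x * (a * b))) b) ∧
    (paperComm x ((b * c)⁻¹ * x * (b * c)) = paperComm (b⁻¹ * x * b) (c⁻¹ * x * c) ∧
      Commute (paperComm x ((b * c)⁻¹ * x * (b * c))) x ∧
      Commute (paperComm x ((b * c)⁻¹ * x * (b * c))) b ∧
      Commute (paperComm x ((b * c)⁻¹ * x * (b * c))) c) ∧
    (paperComm x ((c * a)⁻¹ * x * (c * a)) = paperComm (c⁻¹ * x * c) (a⁻¹ * x * a) ∧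
      Commute (paperComm x ((c * a)⁻¹ * x * (c * a))) x ∧
      Commute (paperComm x ((c * a)⁻¹ * x * (c * a))) c ∧
      Commute (paperComm x ((c * a)⁻¹ * x * (c * a))) a) := by
  have inv {g : G} (hg : g ^ 2 = 1) : g⁻¹ = g :=
    inv_eq_of_mul_eq_one_right ((sq g).symm.trans hg)
  have hX (u) (hu : u ∈ ({x, a, b, c} : Set G)) (v) (hv : v ∈ ({x, a, b, c} : Set G)) (g : G) :
      Commute ⁅u, g⁻¹ * v * g⁆ u :=
    commute_commutatorElement_of_closure_pair (hsand u hu v hv g)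
  obtain ⟨hxX, haX, hbX, hcX⟩ :
      x ∈ ({x, a, b, c} : Set G) ∧ a ∈ ({x, a, b, c} : Set G) ∧
        b ∈ ({x, a, b, c} : Set G) ∧ c ∈ ({x, a, b, c} : Set G) := by simp
  exact ⟨paperComm_conj_mul_eq_and_commute hX hxX haX hbX (inv hx) (inv ha) (inv hb) hab,
    paperComm_conj_mul_eq_and_commute hX hxX hbX hcX (inv hx) (inv hb) (inv hc) hbc,
    paperComm_conj_mul_eq_and_commute hX hxX hcX haX (inv hx) (inv hc) (inv ha) hca⟩

theorem stmt5 {G : Type*} [Group G] (x a b c : G)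
    (hx : x ^ 2 = 1) (ha : a ^ 2 = 1) (hb : b ^ 2 = 1) (hc : c ^ 2 = 1)
    (hab : Commute a b) (hbc : Commute b c) (hca : Commute c a)
    (hgen : Subgroup.closure ({x, a, b, c} : Set G) = ⊤)
    (hsand : ∀ u ∈ ({x, a, b, c} : Set G), ∀ v ∈ ({x, a, b, c} : Set G), ∀ g : G,
      (⊤ : Subgroup ↥(Subgroup.closure ({u, g⁻¹ * v * g} : Set G))).lowerCentralSeries 2 = ⊥) :
    (paperComm x ((a * b)⁻¹ * x * (a * b)) = paperComm (a⁻¹ * x * a) (b⁻¹ * x * b) ∧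
      Commute (paperComm x ((a * b)⁻¹ * x * (a * b))) x ∧
      Commute (paperComm x ((a * b)⁻¹ * x * (a * b))) a ∧
      Commute (paperComm x ((a * b)⁻¹ * x * (a * b))) b) ∧
    (paperComm x ((b * c)⁻¹ * x * (b * c)) = paperComm (b⁻¹ * x * b) (c⁻¹ * x * c) ∧
      Commute (paperComm x ((b * c)⁻¹ * x * (b * c))) x ∧
      Commute (paperComm x ((b * c)⁻¹ * x * (b * c))) b ∧
      Commute (paperComm x ((b * c)⁻¹ * x * (b * c))) c) ∧
    (paperComm x ((c * a)⁻¹ * x * (c * a)) = paperComm (c⁻¹ * x * c) (a⁻¹ * x * a) ∧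
      Commute (paperComm x ((c * a)⁻¹ * x * (c * a))) x ∧
      Commute (paperComm x ((c * a)⁻¹ * x * (c * a))) c ∧
      Commute (paperComm x ((c * a)⁻¹ * x * (c * a))) a) :=
  stmt5_general x a b c hx ha hb hc hab hbc hca hsand
end

section
/- Let G be a group with no elements of order 8 and let x ∈ G be a left 3-Engel element of order 2. Then for every involution h ∈ G and every conjugate y of x in G, the elements y and y^h commute, i.e. [y, y^h] = 1. -/
theorem stmt12 {G : Type*} [Group G] (x : G)
    (h8 : ∀ w : G, orderOf w ≠ 8)
    (hEngel : IsLeftThreeEngel x)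
    (hx : orderOf x = 2)
    (h : G) (hh : h ^ 2 = 1)
    (y : G) (hy : ∃ w : G, y = w⁻¹ * x * w) :
    paperComm y (h⁻¹ * y * h) = 1 := by
  obtain ⟨w, rfl⟩ := hy
  have hx2 : x * x = 1 := by
    have := pow_orderOf_eq_one x
    rw [hx, sq] at this; exact this
  set y := w⁻¹ * x * w with hydef
  -- basic relations
  have hy2 : y * y = 1 := by
    rw [hydef]
    calc w⁻¹ * x * w * (w⁻¹ * x * w) = w⁻¹ * (x * x) * w := by group
    _ = 1 := by rw [hx2]; group
  have hh2 : h * h = 1 := by rw [← sq]; exact hh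
  have hyl : ∀ a : G, y * (y * a) = a := fun a => by
    rw [← mul_assoc, hy2, one_mul]
  have hhl : ∀ a : G, h * (h * a) = a := fun a => by
    rw [← mul_assoc, hh2, one_mul]
  have hyinv : y⁻¹ = y := by
    rw [inv_eq_iff_mul_eq_one, hy2]
  have hhinv : h⁻¹ = h := by
    rw [inv_eq_iff_mul_eq_one, hh2]
  -- y is left 3-Engel
  have hEngelY : ∀ g : G, paperComm (paperComm (paperComm g y) y) y = 1 := by
    intro g
    have key : paperComm (paperComm (paperComm g y) y) y =
        w⁻¹ * paperComm (paperComm (paperComm (w * g * w⁻¹) x) x) x * w := by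
      rw [hydef]; simp only [paperComm]; group
    rw [key, hEngel]; group
  -- instantiate at z = h⁻¹ y h
  have E := hEngelY (h⁻¹ * y * h)
  have h16 : (y * h) ^ 16 = 1 := by
    have key : (y * h) ^ 16 = (paperComm (paperComm (paperComm (h⁻¹ * y * h) y) y) y)⁻¹ := by
      simp only [paperComm, hyinv, hhinv, mul_inv_rev, inv_inv]
      simp only [pow_succ, pow_zero, one_mul, mul_assoc, hyl, hhl, mul_one, hy2, hh2]
    rw [key, E, inv_one]
  -- order considerations
  have ht16 : orderOf (y * h) ∣ 16 := orderOf_dvd_of_pow_eq_one h16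
  have h8' : ((y * h) ^ 2) ^ 8 = 1 := by rw [← pow_mul]; exact h16
  have hsq : orderOf ((y * h) ^ 2) ∣ 8 := orderOf_dvd_of_pow_eq_one h8'
  have hsq4 : orderOf ((y * h) ^ 2) ∣ 4 := by
    have hne := h8 ((y * h) ^ 2)
    have hle : orderOf ((y * h) ^ 2) ≤ 8 := Nat.le_of_dvd (by norm_num) hsq
    have hpos : 0 < orderOf ((y * h) ^ 2) := Nat.pos_of_dvd_of_pos hsq (by norm_num)
    interval_cases hv : orderOf ((y * h) ^ 2) <;> omega
  have h8'' : (y * h) ^ 8 = 1 := by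
    have : ((y * h) ^ 2) ^ 4 = 1 := orderOf_dvd_iff_pow_eq_one.mp hsq4
    rw [← pow_mul] at this; exact this
  have ht8 : orderOf (y * h) ∣ 8 := orderOf_dvd_of_pow_eq_one h8''
  have ht4 : orderOf (y * h) ∣ 4 := by
    have hne := h8 (y * h)
    have hle : orderOf (y * h) ≤ 8 := Nat.le_of_dvd (by norm_num) ht8
    have hpos : 0 < orderOf (y * h) := Nat.pos_of_dvd_of_pos ht8 (by norm_num)
    interval_cases hv : orderOf (y * h) <;> omega
  have h4 : (y * h) ^ 4 = 1 := orderOf_dvd_iff_pow_eq_one.mp ht4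
  -- the goal is (y*h)^4
  calc paperComm y (h⁻¹ * y * h) = (y * h) ^ 4 := by
        simp only [paperComm, hyinv, hhinv, mul_inv_rev, inv_inv]
        simp only [pow_succ, pow_zero, one_mul, mul_assoc, hyl, hhl, mul_one, hy2, hh2]
    _ = 1 := h4
end

section
/- Let G be a group with no elements of order 8 and let x ∈ G be a left 3-Engel element of order 2. If y and z are two conjugates of x in G that commute with each other, and h ∈ G is an involution, then [y^h, z] = [y, z^h]. -/
theorem conj4 {G : Type*} [Group G] (x : G) (hx2 : x * x = 1)
    (hE : ∀ g, paperComm (paperComm (paperComm g x) x) x = 1) (u v : G) :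
    ((u⁻¹ * x * u) * (v⁻¹ * x * v))^4 = 1 := by
  have hxi : x⁻¹ = x := by rw [← mul_eq_one_iff_inv_eq]; exact hx2
  have hxx : ∀ w : G, x * (x * w) = w := by
    intro w; rw [← mul_assoc, hx2, one_mul]
  have key : (((u * v⁻¹)⁻¹ * x * (u * v⁻¹)) * x)^4 = 1 := by
    have hE' := hE (u * v⁻¹)
    simp only [paperComm, hxi, mul_inv_rev, inv_inv] at hE'
    simp only [mul_assoc, hxx, inv_mul_cancel_left, mul_inv_cancel_left] at hE'
    simp only [pow_succ, pow_zero, one_mul, mul_inv_rev, inv_inv, mul_assoc, hxx,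
      inv_mul_cancel_left, mul_inv_cancel_left]
    exact hE'
  have h1 : (u⁻¹ * x * u) * (v⁻¹ * x * v) = v⁻¹ * (((u * v⁻¹)⁻¹ * x * (u * v⁻¹)) * x) * v := by
    group
  have conjpow : ∀ a : G, (v⁻¹ * a * v)^4 = v⁻¹ * a^4 * v := by
    intro a
    simp [pow_succ, mul_assoc, inv_mul_cancel_left, mul_inv_cancel_left]
  rw [h1, conjpow, key, mul_one, inv_mul_cancel]

theorem pow4of8 {G : Type*} [Group G] (h8 : ∀ w : G, orderOf w ≠ 8) (w : G)
    (hw : w ^ 8 = 1) : w ^ 4 = 1 := by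
  have h1 : orderOf w ∣ 2^3 := by
    have := orderOf_dvd_of_pow_eq_one hw; norm_num; exact this
  have h2 : orderOf w ∣ 4 := by
    rcases (Nat.dvd_prime_pow Nat.prime_two).1 h1 with ⟨k, hk, he⟩
    have hk2 : k ≤ 2 := by
      by_contra hc
      have : k = 3 := by omega
      exact h8 w (by rw [he, show k = 3 by omega]; norm_num)
    rw [he]
    interval_cases k <;> norm_num
  exact orderOf_dvd_iff_pow_eq_one.mp h2

theorem stmt13 {G : Type*} [Group G] (x : G)
    (h8 : ∀ w : G, orderOf w ≠ 8)
    (hEngel : IsLeftThreeEngel x)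
    (hx : orderOf x = 2)
    (y z : G) (hy : ∃ w : G, y = w⁻¹ * x * w) (hz : ∃ w : G, z = w⁻¹ * x * w)
    (hyz : Commute y z)
    (h : G) (hh : h ^ 2 = 1) :
    paperComm (h⁻¹ * y * h) z = paperComm y (h⁻¹ * z * h) := by
  obtain ⟨a, ha⟩ := hy
  obtain ⟨b, hb⟩ := hz
  have hx2 : x * x = 1 := by
    have := pow_orderOf_eq_one x; rw [hx, pow_two] at this; exact this
  have hh2 : h * h = 1 := by rw [← pow_two]; exact hh
  have hhi : h⁻¹ = h := by rw [← mul_eq_one_iff_inv_eq]; exact hh2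
  have hxx : ∀ w : G, x * (x * w) = w := by
    intro w; rw [← mul_assoc, hx2, one_mul]
  have hy2 : y * y = 1 := by
    rw [ha]; simp [mul_assoc, inv_mul_cancel_left, hxx]
  have hz2 : z * z = 1 := by
    rw [hb]; simp [mul_assoc, inv_mul_cancel_left, hxx]
  have hyi : y⁻¹ = y := by rw [← mul_eq_one_iff_inv_eq]; exact hy2
  have hzi : z⁻¹ = z := by rw [← mul_eq_one_iff_inv_eq]; exact hz2
  -- conjugates
  have hyh : h⁻¹ * y * h = (a * h)⁻¹ * x * (a * h) := by rw [ha]; group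
  have hzh : h⁻¹ * z * h = (b * h)⁻¹ * x * (b * h) := by rw [hb]; group
  have hyhi : (h⁻¹ * y * h)⁻¹ = h⁻¹ * y * h := by
    simp [hhi, mul_inv_rev, hyi, mul_assoc]
  have hzhi : (h⁻¹ * z * h)⁻¹ = h⁻¹ * z * h := by
    simp [hhi, mul_inv_rev, hzi, mul_assoc]
  set t := (h⁻¹ * y * h) * z with htdef
  set s := y * (h⁻¹ * z * h) with hsdef
  have ht4 : t ^ 4 = 1 := by
    rw [htdef, hyh, hb]; exact conj4 x hx2 hEngel (a*h) b
  have hs4 : s ^ 4 = 1 := by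
    rw [hsdef, ha, hzh]; exact conj4 x hx2 hEngel a (b*h)
  -- y commutes with y^h
  have hyyh : Commute (h⁻¹ * y * h) y := by
    have e8 : (h * y) ^ 8 = 1 := by
      have e2 : (h * y) ^ 2 = (h⁻¹ * y * h) * y := by rw [hhi, pow_two]; group
      have : ((h⁻¹ * y * h) * y) ^ 4 = 1 := by
        rw [hyh, ha]; exact conj4 x hx2 hEngel (a*h) a
      calc (h * y) ^ 8 = ((h * y) ^ 2) ^ 4 := by rw [← pow_mul]
        _ = 1 := by rw [e2, this]
    have e4 : (h * y) ^ 4 = 1 := pow4of8 h8 _ e8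
    have e2 : ((h⁻¹ * y * h) * y) ^ 2 = 1 := by
      have : ((h⁻¹ * y * h) * y) ^ 2 = (h * y) ^ 4 := by
        rw [hhi, show (4:ℕ) = 2*2 from rfl, pow_mul]
        congr 1
        rw [pow_two, ← mul_assoc]
      rw [this, e4]
    have : (h⁻¹ * y * h) * y * ((h⁻¹ * y * h) * y) = 1 := by rw [← pow_two]; exact e2
    have hinv : ((h⁻¹ * y * h) * y)⁻¹ = y * (h⁻¹ * y * h) := by
      rw [mul_inv_rev, hyhi, hyi]
    unfold Commute SemiconjBy
    calc (h⁻¹ * y * h) * y = ((h⁻¹ * y * h) * y)⁻¹ := by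
          rw [← mul_eq_one_iff_eq_inv]; exact this
      _ = y * (h⁻¹ * y * h) := hinv
  have hzzh : Commute (h⁻¹ * z * h) z := by
    have e8 : (h * z) ^ 8 = 1 := by
      have e2 : (h * z) ^ 2 = (h⁻¹ * z * h) * z := by rw [hhi, pow_two]; group
      have : ((h⁻¹ * z * h) * z) ^ 4 = 1 := by
        rw [hzh, hb]; exact conj4 x hx2 hEngel (b*h) b
      calc (h * z) ^ 8 = ((h * z) ^ 2) ^ 4 := by rw [← pow_mul]
        _ = 1 := by rw [e2, this]
    have e4 : (h * z) ^ 4 = 1 := pow4of8 h8 _ e8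
    have e2 : ((h⁻¹ * z * h) * z) ^ 2 = 1 := by
      have : ((h⁻¹ * z * h) * z) ^ 2 = (h * z) ^ 4 := by
        rw [hhi, show (4:ℕ) = 2*2 from rfl, pow_mul]
        congr 1
        rw [pow_two, ← mul_assoc]
      rw [this, e4]
    have : (h⁻¹ * z * h) * z * ((h⁻¹ * z * h) * z) = 1 := by rw [← pow_two]; exact e2
    have hinv : ((h⁻¹ * z * h) * z)⁻¹ = z * (h⁻¹ * z * h) := by
      rw [mul_inv_rev, hzhi, hzi]
    unfold Commute SemiconjBy
    calc (h⁻¹ * z * h) * z = ((h⁻¹ * z * h) * z)⁻¹ := by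
          rw [← mul_eq_one_iff_eq_inv]; exact this
      _ = z * (h⁻¹ * z * h) := hinv
  -- t commutes with s
  have hyzh : (h⁻¹ * z * h) * (h⁻¹ * y * h) = (h⁻¹ * y * h) * (h⁻¹ * z * h) := by
    have : z * y = y * z := hyz.symm.eq
    calc (h⁻¹ * z * h) * (h⁻¹ * y * h) = h⁻¹ * (z * (h * h⁻¹) * y) * h := by group
      _ = h⁻¹ * (z * y) * h := by rw [mul_inv_cancel]; group
      _ = h⁻¹ * (y * z) * h := by rw [this]
      _ = (h⁻¹ * y * h) * (h⁻¹ * z * h) := by group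
  have hts : Commute t s := by
    unfold Commute SemiconjBy
    rw [htdef, hsdef]
    calc (h⁻¹ * y * h) * z * (y * (h⁻¹ * z * h))
        = (h⁻¹ * y * h) * (z * y) * (h⁻¹ * z * h) := by group
      _ = (h⁻¹ * y * h) * (y * z) * (h⁻¹ * z * h) := by rw [hyz.symm.eq]
      _ = ((h⁻¹ * y * h) * y) * (z * (h⁻¹ * z * h)) := by group
      _ = (y * (h⁻¹ * y * h)) * ((h⁻¹ * z * h) * z) := by rw [hyyh.eq, hzzh.symm.eq]
      _ = y * ((h⁻¹ * y * h) * (h⁻¹ * z * h)) * z := by group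
      _ = y * ((h⁻¹ * z * h) * (h⁻¹ * y * h)) * z := by rw [← hyzh]
      _ = y * (h⁻¹ * z * h) * ((h⁻¹ * y * h) * z) := by group
  -- m = t * h
  have hm2 : (t * h) ^ 2 = t * s := by
    rw [htdef, hsdef, hhi]
    calc (h * y * h * z * h) ^ 2 = h * y * h * z * (h * h) * y * h * z * h := by
          rw [pow_two]; group
      _ = h * y * h * z * y * h * z * h := by rw [hh2]; group
      _ = (h * y * h * z) * (y * (h * z * h)) := by group
  have hm8 : (t * h) ^ 8 = 1 := by
    calc (t * h) ^ 8 = ((t * h) ^ 2) ^ 4 := by rw [← pow_mul]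
      _ = (t * s) ^ 4 := by rw [hm2]
      _ = t ^ 4 * s ^ 4 := hts.mul_pow 4
      _ = 1 := by rw [ht4, hs4, one_mul]
  have hm4 : (t * h) ^ 4 = 1 := pow4of8 h8 _ hm8
  have hts2 : t ^ 2 * s ^ 2 = 1 := by
    calc t ^ 2 * s ^ 2 = (t * s) ^ 2 := (hts.mul_pow 2).symm
      _ = ((t * h) ^ 2) ^ 2 := by rw [hm2]
      _ = (t * h) ^ 4 := by rw [← pow_mul]
      _ = 1 := hm4
  have hfinal : t ^ 2 = s ^ 2 := by
    have h1 : (t ^ 2)⁻¹ = s ^ 2 := mul_eq_one_iff_inv_eq.mp hts2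
    have h2 : t ^ 2 = (t ^ 2)⁻¹ := by
      apply mul_eq_one_iff_eq_inv.mp
      rw [← pow_add]; exact ht4
    rw [h2, h1]
  -- finish
  have lhs : paperComm (h⁻¹ * y * h) z = t ^ 2 := by
    rw [paperComm, hyhi, hzi, htdef, pow_two]; group
  have rhs : paperComm y (h⁻¹ * z * h) = s ^ 2 := by
    rw [paperComm, hyi, hzhi, hsdef, pow_two]; group
  rw [lhs, rhs, hfinal]
end

section
/- Let G be a group with no elements of order 8, let x ∈ G be a left 3-Engel element of order 2, and let g ∈ G be an element of order 4. Let u, v, t be three distinct elements of {x, x^g, x^{g²}, x^{g³}} such that u and v commute. Then the subgroup ⟨u, v, t⟩ is nilpotent of class at most 3. -/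
/-!
For an involution `y`, `[[[k, y], y], y] = [k, y]⁴`, and `[m, y] = (m y)²` for every involution
`m`. So if `y` is a left 3-Engel involution then `(m y)⁸ = 1`, hence `(m y)⁴ = 1` as there are no
elements of order 8; this applies to every conjugate of `x`. For involutions `m, s` with
`(m s)⁴ = 1`, the commutator `⁅m, s⁆ = (m s)²` is an involution commuting with `m` and `s`.

Write `a, b, c` for `u, v, t` and put `z₁ = ⁅a, c⁆`, `z₂ = ⁅b, c⁆`. The Hall–Witt identity for
`(z₁, b, c)` shows that `⁅z₁, z₂⁆` is an involution; since `a b = b a` gives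
`⁅z₁, z₂⁆ = (a c b)⁴`, the absence of elements of order 8 forces `⁅z₁, z₂⁆ = 1`. Consequently
`⁅z₁, b⁆` and `⁅z₂, a⁆` commute with `a, b, c` and are central in `⟨a, b, c⟩`, so `z₁, z₂` lie in
the second and `a, b, c` in the third term of the upper central series.
-/

open scoped commutatorElement

section

variable {G : Type*} [Group G]

theorem commutatorElement_eq_sq {y z : G} (hy : y⁻¹ = y) (hz : z⁻¹ = z) :
    ⁅y, z⁆ = (y * z) ^ 2 := by
  rw [commutatorElement_def, hy, hz, sq, ← mul_assoc]

theorem commutatorElement_inv_eq_self {y z : G} (hy : y⁻¹ = y) (hz : z⁻¹ = z)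
    (h4 : (y * z) ^ 4 = 1) : ⁅y, z⁆⁻¹ = ⁅y, z⁆ := by
  rw [commutatorElement_eq_sq hy hz]
  exact inv_eq_of_mul_eq_one_right (by rw [← pow_add]; exact h4)

theorem commutatorElement_comm {y z : G} (hy : y⁻¹ = y) (hz : z⁻¹ = z)
    (h4 : (y * z) ^ 4 = 1) : ⁅y, z⁆ = ⁅z, y⁆ := by
  rw [← commutatorElement_inv y z, commutatorElement_inv_eq_self hy hz h4]

theorem commute_commutatorElement_left {y z : G} (hy : y⁻¹ = y) (hz : z⁻¹ = z)
    (h4 : (y * z) ^ 4 = 1) : Commute ⁅y, z⁆ y := by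
  show _ * _ = _ * _
  nth_rw 2 [commutatorElement_comm hy hz h4]
  simp only [commutatorElement_def, hy, hz, mul_assoc]

theorem commute_commutatorElement_right {y z : G} (hy : y⁻¹ = y) (hz : z⁻¹ = z)
    (h4 : (y * z) ^ 4 = 1) : Commute ⁅y, z⁆ z := by
  show _ * _ = _ * _
  nth_rw 1 [commutatorElement_comm hy hz h4]
  simp only [commutatorElement_def, hy, hz, mul_assoc]

theorem Commute.commutatorElement_right {a y z : G} (hy : Commute a y) (hz : Commute a z) :
    Commute a ⁅y, z⁆ := by
  rw [commutatorElement_def]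
  exact ((hy.mul_right hz).mul_right hy.inv_right).mul_right hz.inv_right

theorem commute_commutatorElement_of_commute_commutatorElement {z b c : G} (hb : b⁻¹ = b)
    (hzc : Commute z c) (hz : Commute z ⁅b, c⁆) : Commute ⁅z, b⁆ c := by
  have hbcb : Commute z (b⁻¹ * c * b) := by
    rw [show b⁻¹ * c * b = ⁅b, c⁆ * c by rw [commutatorElement_def, inv_mul_cancel_right, hb]]
    exact hz.mul_right hzc
  have hconj : Commute (b * z⁻¹ * b⁻¹) c := by
    simpa [mul_assoc] using hbcb.inv_left.conj b
  rw [commutatorElement_def, mul_assoc, mul_assoc, ← mul_assoc b]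
  exact hzc.mul_left hconj

theorem commutatorElement_mem_of_closure_eq_top {S : Set G} (hS : Subgroup.closure S = ⊤)
    (N : Subgroup G) [N.Normal] {g : G} (h : ∀ s ∈ S, ⁅g, s⁆ ∈ N) (y : G) : ⁅g, y⁆ ∈ N := by
  let C := (Subgroup.centralizer {(g : G ⧸ N)}).comap (QuotientGroup.mk' N)
  have hC : ∀ y, ⁅g, y⁆ ∈ N ↔ y ∈ C := fun y => by
    rw [← QuotientGroup.eq_one_iff, ← QuotientGroup.mk'_apply, map_commutatorElement,
      commutatorElement_eq_one_iff_commute, Subgroup.mem_comap,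
      Subgroup.mem_centralizer_singleton_iff]
    exact eq_comm
  have hSC : Subgroup.closure S ≤ C := (Subgroup.closure_le C).2 fun s hs => (hC s).1 (h s hs)
  exact (hC y).2 (hSC (hS ▸ Subgroup.mem_top y))

theorem mem_upperCentralSeries_succ_of_closure_eq_top {S : Set G} (hS : Subgroup.closure S = ⊤)
    {n : ℕ} {g : G} (h : ∀ s ∈ S, ⁅g, s⁆ ∈ Subgroup.upperCentralSeries G n) :
    g ∈ Subgroup.upperCentralSeries G (n + 1) :=
  Subgroup.mem_upperCentralSeries_succ_iff.2 <|
    commutatorElement_mem_of_closure_eq_top hS (Subgroup.upperCentralSeries G n) h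

theorem pow_four_eq_one_of_pow_eight_eq_one (h8 : ∀ w : G, orderOf w ≠ 8) {w : G}
    (hw : w ^ 8 = 1) : w ^ 4 = 1 := by
  obtain ⟨k, hk, hwk⟩ := (Nat.dvd_prime_pow Nat.prime_two).1
    (orderOf_dvd_of_pow_eq_one (n := 2 ^ 3) hw)
  refine orderOf_dvd_iff_pow_eq_one.1 ?_
  interval_cases k
  all_goals simp_all

def IsQuarticInvolution (s : G) : Prop :=
  s⁻¹ = s ∧ ∀ m : G, m⁻¹ = m → (m * s) ^ 4 = 1

theorem paperComm_paperComm_paperComm_of_inv_eq_self {x : G} (hx : x⁻¹ = x) (k : G) :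
    paperComm (paperComm (paperComm k x) x) x = paperComm k x ^ 4 := by
  have hxx : ∀ t : G, x * (x * t) = t := fun t => by
    nth_rw 1 [← hx]; exact inv_mul_cancel_left x t
  simp only [paperComm, hx, mul_inv_rev, inv_inv, pow_succ, pow_zero, one_mul, mul_assoc, hxx]

theorem IsLeftThreeEngel.conj {x : G} (hx : IsLeftThreeEngel x) (f : G) :
    IsLeftThreeEngel (f⁻¹ * x * f) := by
  intro g
  simpa [paperComm, mul_assoc] using congrArg (MulAut.conj f⁻¹) (hx (f * g * f⁻¹))

theorem IsLeftThreeEngel.isQuarticInvolution (h8 : ∀ w : G, orderOf w ≠ 8) {y : G}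
    (hE : IsLeftThreeEngel y) (hy : y⁻¹ = y) : IsQuarticInvolution y := by
  refine ⟨hy, fun m hm => pow_four_eq_one_of_pow_eight_eq_one h8 ?_⟩
  have hcomm : paperComm m y = (m * y) ^ 2 := by
    rw [paperComm, hm, hy, sq, ← mul_assoc]
  rw [← hE m, paperComm_paperComm_paperComm_of_inv_eq_self hy, hcomm, ← pow_mul]

theorem commutatorElement_commutatorElement_inv_eq_self {a b c : G} (ha : a⁻¹ = a)
    (hb : IsQuarticInvolution b) (hc : IsQuarticInvolution c) :
    ⁅⁅a, c⁆, ⁅b, c⁆⁆⁻¹ = ⁅⁅a, c⁆, ⁅b, c⁆⁆ := by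
  have hz₁ : ⁅a, c⁆⁻¹ = ⁅a, c⁆ := commutatorElement_inv_eq_self ha hc.1 (hc.2 a ha)
  have hw : ⁅⁅a, c⁆, b⁆⁻¹ = ⁅⁅a, c⁆, b⁆ := commutatorElement_inv_eq_self hz₁ hb.1 (hb.2 _ hz₁)
  have hω : ⁅⁅⁅a, c⁆, b⁆, c⁆⁻¹ = ⁅⁅⁅a, c⁆, b⁆, c⁆ :=
    commutatorElement_inv_eq_self hw hc.1 (hc.2 _ hw)
  have hz₁c : ⁅c⁻¹, ⁅a, c⁆⁆ = 1 :=
    (commute_commutatorElement_right ha hc.1 (hc.2 a ha)).symm.inv_left.commutator_eq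
  -- The middle Hall–Witt factor vanishes because `⁅a, c⁆` commutes with `c`.
  have hallWitt := conj_commutatorElement_left_commutatorElement_mul ⁅a, c⁆ b c
  rw [hz₁c, hz₁, hb.1, commutatorElement_one_left, mul_one, mul_inv_cancel_right] at hallWitt
  have hconj : ⁅⁅b, c⁆, ⁅a, c⁆⁆ = b * ⁅a, c⁆ * ⁅⁅⁅a, c⁆, b⁆, c⁆ * ⁅a, c⁆ * b := by
    rw [eq_inv_mul_of_mul_eq (eq_inv_of_mul_eq_one_left hallWitt)]
    simp only [mul_inv_rev, hz₁, hω, hb.1, mul_assoc]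
  rw [← commutatorElement_inv ⁅b, c⁆, inv_inv, hconj]
  simp only [mul_inv_rev, hz₁, hω, hb.1, mul_assoc]

theorem sq_mul_mul_eq_commutatorElement_mul {a b c : G} (ha : a⁻¹ = a) (hb : b⁻¹ = b)
    (hc : c⁻¹ = c) (hab : Commute a b) (hbc : Commute ⁅b, c⁆ c) :
    (a * c * b) ^ 2 = ⁅a, c⁆ * ⁅b, c⁆ := by
  have hcz₂ : c * ⁅b, c⁆ = b * c * b := by
    rw [← hbc.eq, commutatorElement_def, inv_mul_cancel_right, hb]
  calc (a * c * b) ^ 2 = a * c * (b * a) * c * b := by simp only [sq, mul_assoc]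
    _ = a * c * a * (c * ⁅b, c⁆) := by rw [← hab.eq, hcz₂]; simp only [mul_assoc]
    _ = ⁅a, c⁆ * ⁅b, c⁆ := by rw [commutatorElement_def a c, ha, hc]; simp only [mul_assoc]

theorem commute_commutatorElement_commutatorElement (h8 : ∀ w : G, orderOf w ≠ 8) {a b c : G}
    (ha : IsQuarticInvolution a) (hb : IsQuarticInvolution b) (hc : IsQuarticInvolution c)
    (hab : Commute a b) : Commute ⁅a, c⁆ ⁅b, c⁆ := by
  have hz₁ : ⁅a, c⁆⁻¹ = ⁅a, c⁆ := commutatorElement_inv_eq_self ha.1 hc.1 (hc.2 a ha.1)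
  have hz₂ : ⁅b, c⁆⁻¹ = ⁅b, c⁆ := commutatorElement_inv_eq_self hb.1 hc.1 (hc.2 b hb.1)
  have hsq : ⁅⁅a, c⁆, ⁅b, c⁆⁆ = (a * c * b) ^ 4 := by
    rw [commutatorElement_eq_sq hz₁ hz₂, ← sq_mul_mul_eq_commutatorElement_mul ha.1 hb.1 hc.1 hab
      (commute_commutatorElement_right hb.1 hc.1 (hc.2 b hb.1)), ← pow_mul]
  have h8' : (a * c * b) ^ 8 = 1 := by
    rw [show 8 = 4 * 2 from rfl, pow_mul, ← hsq, sq]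
    nth_rw 1 [← commutatorElement_commutatorElement_inv_eq_self ha.1 hb hc]
    exact inv_mul_cancel _
  rw [← commutatorElement_eq_one_iff_commute, hsq]
  exact pow_four_eq_one_of_pow_eight_eq_one h8 h8'

theorem commutatorElement_mem_upperCentralSeries_two (h8 : ∀ w : G, orderOf w ≠ 8) {a b c : G}
    (hS : Subgroup.closure {a, b, c} = ⊤) (ha : IsQuarticInvolution a)
    (hb : IsQuarticInvolution b) (hc : IsQuarticInvolution c) (hab : Commute a b) :
    ⁅a, c⁆ ∈ Subgroup.upperCentralSeries G 2 := by
  have hz₁ : ⁅a, c⁆⁻¹ = ⁅a, c⁆ := commutatorElement_inv_eq_self ha.1 hc.1 (hc.2 a ha.1)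
  have hz₁a : Commute ⁅a, c⁆ a := commute_commutatorElement_left ha.1 hc.1 (hc.2 a ha.1)
  have hz₁c : Commute ⁅a, c⁆ c := commute_commutatorElement_right ha.1 hc.1 (hc.2 a ha.1)
  have hw : ⁅⁅a, c⁆, b⁆ ∈ Subgroup.upperCentralSeries G 1 := by
    refine mem_upperCentralSeries_succ_of_closure_eq_top hS ?_
    simp only [Set.mem_insert_iff, Set.mem_singleton_iff, forall_eq_or_imp, forall_eq,
      Subgroup.upperCentralSeries_zero, Subgroup.mem_bot, commutatorElement_eq_one_iff_commute]
    exact ⟨(hz₁a.symm.commutatorElement_right hab).symm,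
      commute_commutatorElement_right hz₁ hb.1 (hb.2 _ hz₁),
      commute_commutatorElement_of_commute_commutatorElement hb.1 hz₁c
        (commute_commutatorElement_commutatorElement h8 ha hb hc hab)⟩
  refine mem_upperCentralSeries_succ_of_closure_eq_top hS ?_
  simp only [Set.mem_insert_iff, Set.mem_singleton_iff, forall_eq_or_imp, forall_eq]
  exact ⟨by simp [hz₁a.commutator_eq], hw, by simp [hz₁c.commutator_eq]⟩

theorem upperCentralSeries_eq_top_of_closure_eq_top (h8 : ∀ w : G, orderOf w ≠ 8) {a b c : G}
    (hS : Subgroup.closure {a, b, c} = ⊤) (ha : IsQuarticInvolution a)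
    (hb : IsQuarticInvolution b) (hc : IsQuarticInvolution c) (hab : Commute a b) :
    Subgroup.upperCentralSeries G 3 = ⊤ := by
  have hz₁ := commutatorElement_mem_upperCentralSeries_two h8 hS ha hb hc hab
  have hz₂ := commutatorElement_mem_upperCentralSeries_two h8 (by rwa [Set.insert_comm]) hb ha hc
    hab.symm
  rw [eq_top_iff, ← hS, Subgroup.closure_le]
  simp only [Set.insert_subset_iff, Set.singleton_subset_iff, SetLike.mem_coe]
  refine ⟨?_, ?_, ?_⟩ <;> refine mem_upperCentralSeries_succ_of_closure_eq_top hS ?_ <;>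
    simp only [Set.mem_insert_iff, Set.mem_singleton_iff, forall_eq_or_imp, forall_eq]
  · exact ⟨by simp, by simp [hab.commutator_eq], hz₁⟩
  · exact ⟨by simp [hab.symm.commutator_eq], by simp, hz₂⟩
  · rw [← commutatorElement_inv a, ← commutatorElement_inv b]
    exact ⟨inv_mem hz₁, inv_mem hz₂, by simp⟩

theorem IsQuarticInvolution.of_map {H : Type*} [Group H] {φ : H →* G}
    (hφ : Function.Injective φ) {s : H} (hs : IsQuarticInvolution (φ s)) :
    IsQuarticInvolution s :=
  ⟨hφ (by rw [map_inv, hs.1]), fun m hm => hφ (by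
    rw [map_pow, map_mul, map_one]; exact hs.2 _ (by rw [← map_inv, hm]))⟩

theorem lowerCentralSeries_closure_eq_bot (h8 : ∀ w : G, orderOf w ≠ 8) {a b c : G}
    (ha : IsQuarticInvolution a) (hb : IsQuarticInvolution b) (hc : IsQuarticInvolution c)
    (hab : Commute a b) :
    Subgroup.lowerCentralSeries (⊤ : Subgroup (Subgroup.closure ({a, b, c} : Set G))) 3 = ⊥ := by
  set K := Subgroup.closure ({a, b, c} : Set G)
  let a' : K := ⟨a, Subgroup.subset_closure (by simp)⟩
  let b' : K := ⟨b, Subgroup.subset_closure (by simp)⟩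
  let c' : K := ⟨c, Subgroup.subset_closure (by simp)⟩
  have hS : Subgroup.closure {a', b', c'} = ⊤ := by
    rw [← Subgroup.closure_closure_coe_preimage (k := {a, b, c})]
    congr 1
    ext k
    simp [a', b', c', Subtype.ext_iff]
  have hK := K.subtype_injective
  rw [Subgroup.lowerCentralSeries_eq_bot_iff_upperCentralSeries_eq_top]
  exact upperCentralSeries_eq_top_of_closure_eq_top
    (fun w => orderOf_injective K.subtype hK w ▸ h8 w) hS (ha.of_map (s := a') hK)
    (hb.of_map (s := b') hK) (hc.of_map (s := c') hK) (Subtype.ext hab)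

end

theorem stmt14_general {G : Type*} [Group G] (x g : G)
    (h8 : ∀ w : G, orderOf w ≠ 8)
    (hEngel : IsLeftThreeEngel x)
    (hx : orderOf x = 2)
    (u v t : G)
    (hu : u ∈ ({x, g⁻¹ * x * g, (g ^ 2)⁻¹ * x * g ^ 2, (g ^ 3)⁻¹ * x * g ^ 3} : Set G))
    (hv : v ∈ ({x, g⁻¹ * x * g, (g ^ 2)⁻¹ * x * g ^ 2, (g ^ 3)⁻¹ * x * g ^ 3} : Set G))
    (ht : t ∈ ({x, g⁻¹ * x * g, (g ^ 2)⁻¹ * x * g ^ 2, (g ^ 3)⁻¹ * x * g ^ 3} : Set G))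
    (hcomm : Commute u v) :
    Subgroup.lowerCentralSeries (⊤ : Subgroup ↥(Subgroup.closure ({u, v, t} : Set G))) 3 = ⊥ := by
  have hx2 : x⁻¹ = x := inv_eq_self_of_orderOf_eq_two hx
  have hquartic : ∀ f : G, IsQuarticInvolution (f⁻¹ * x * f) := fun f =>
    (hEngel.conj f).isQuarticInvolution h8 (by simp [mul_assoc, hx2])
  have hmem : ∀ s ∈ ({x, g⁻¹ * x * g, (g ^ 2)⁻¹ * x * g ^ 2, (g ^ 3)⁻¹ * x * g ^ 3} : Set G),
      IsQuarticInvolution s := by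
    simp only [Set.mem_insert_iff, Set.mem_singleton_iff]
    rintro s (rfl | rfl | rfl | rfl)
    · simpa using hquartic 1
    all_goals exact hquartic _
  exact lowerCentralSeries_closure_eq_bot h8 (hmem u hu) (hmem v hv) (hmem t ht) hcomm

theorem stmt14 {G : Type*} [Group G] (x g : G)
    (h8 : ∀ w : G, orderOf w ≠ 8)
    (hEngel : IsLeftThreeEngel x)
    (hx : orderOf x = 2) (hg : orderOf g = 4)
    (u v t : G)
    (hu : u ∈ ({x, g⁻¹ * x * g, (g ^ 2)⁻¹ * x * g ^ 2, (g ^ 3)⁻¹ * x * g ^ 3} : Set G))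
    (hv : v ∈ ({x, g⁻¹ * x * g, (g ^ 2)⁻¹ * x * g ^ 2, (g ^ 3)⁻¹ * x * g ^ 3} : Set G))
    (ht : t ∈ ({x, g⁻¹ * x * g, (g ^ 2)⁻¹ * x * g ^ 2, (g ^ 3)⁻¹ * x * g ^ 3} : Set G))
    (huv : u ≠ v) (hut : u ≠ t) (hvt : v ≠ t)
    (hcomm : Commute u v) :
    Subgroup.lowerCentralSeries (⊤ : Subgroup ↥(Subgroup.closure ({u, v, t} : Set G))) 3 = ⊥ :=
  stmt14_general x g h8 hEngel hx u v t hu hv ht hcomm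
end
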